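/- Assume hypotheses (H1) and (H2), and assume Γ* > 0. Then there exist C < ∞ and δ > 0 such that for every β ∈ (0,∞) and every function h* attaining the minimum in the variational problem defining CAP_β({□},{⊞}) (the equilibrium potential of the pair □,⊞): min_{η ∈ X_□} h*(η) ≥ 1 − C e^{−δβ} and max_{η ∈ X_⊞} h*(η) ≤ C e^{−δβ}. -/

import Mathlib

open scoped Classical

variable {X : Type*}

/-- `ω` (restricted to 0,…,L) is a path of allowed moves from `a` to `b`. -/
def IsPathW (rel : X → X → Prop) (a b : X) (L : ℕ) (ω : ℕ → X) : Prop :=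
  ω 0 = a ∧ ω L = b ∧ ∀ i < L, rel (ω i) (ω (i + 1))

/-- The maximal energy along the path `ω = (ω 0, …, ω L)`. -/
noncomputable def pathMax (H : X → ℝ) (L : ℕ) (ω : ℕ → X) : ℝ :=
  (Finset.range (L + 1)).sup' Finset.nonempty_range_add_one fun i => H (ω i)

/-- Communication height Φ(a,b) between two configurations. -/
noncomputable def commH (rel : X → X → Prop) (H : X → ℝ) (a b : X) : ℝ :=
  sInf { m : ℝ | ∃ L ω, IsPathW rel a b L ω ∧ m = pathMax H L ω }

/-- Communication height Φ(A,B) between two sets of configurations. -/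
noncomputable def commHS (rel : X → X → Prop) (H : X → ℝ) (A B : Set X) : ℝ :=
  sInf { m : ℝ | ∃ a ∈ A, ∃ b ∈ B, m = commH rel H a b }

/-- The graph (X,∼) is connected. -/
def ConnGraph (rel : X → X → Prop) : Prop :=
  ∀ a b : X, ∃ L ω, IsPathW rel a b L ω

/-- Partition function Z_β. -/
noncomputable def Zb [Fintype X] (H : X → ℝ) (β : ℝ) : ℝ :=
  ∑ ξ : X, Real.exp (-β * H ξ)

/-- Gibbs measure μ_β. -/
noncomputable def gibbs [Fintype X] (H : X → ℝ) (β : ℝ) (η : X) : ℝ :=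
  Real.exp (-β * H η) / Zb H β

/-- Metropolis transition rates c_β. -/
noncomputable def crate (rel : X → X → Prop) (H : X → ℝ) (β : ℝ) (η η' : X) : ℝ :=
  if rel η η' then Real.exp (-β * max (H η' - H η) 0) else 0

/-- Dirichlet form E_β(h). -/
noncomputable def dirE [Fintype X] (rel : X → X → Prop) (H : X → ℝ) (β : ℝ)
    (h : X → ℝ) : ℝ :=
  (1 / 2) * ∑ η : X, ∑ η' : X, gibbs H β η * crate rel H β η η' * (h η - h η') ^ 2

/-- Capacity CAP_β(A,B). -/
noncomputable def capB [Fintype X] (rel : X → X → Prop) (H : X → ℝ) (β : ℝ)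
    (A B : Set X) : ℝ :=
  sInf { e : ℝ | ∃ h : X → ℝ, (∀ η, 0 ≤ h η ∧ h η ≤ 1) ∧
    (∀ η ∈ A, h η = 1) ∧ (∀ η ∈ B, h η = 0) ∧ e = dirE rel H β h }

/-- `a` and `b` are connected by a path staying inside `S`. -/
def connIn (rel : X → X → Prop) (S : Set X) (a b : X) : Prop :=
  ∃ L ω, IsPathW rel a b L ω ∧ ∀ i ≤ L, ω i ∈ S

/-- Γ* = Φ(□,⊞) − H(□). -/
noncomputable def gammaStar (rel : X → X → Prop) (H : X → ℝ) (a b : X) : ℝ :=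
  commH rel H a b - H a

/-- X** = {η : H(η) < Γ*}. -/
noncomputable def Xss (rel : X → X → Prop) (H : X → ℝ) (a b : X) : Set X :=
  {η : X | H η < gammaStar rel H a b}

/-- The connected component of X** containing `root`. -/
noncomputable def compOf (rel : X → X → Prop) (H : X → ℝ) (a b root : X) : Set X :=
  {η : X | connIn rel (Xss rel H a b) root η}

/-!
Testing the variational problem with the indicator of `X_□` bounds the capacity by
`|X|² e^{-βΓ*} / (2 Z_β)`: the indicator only jumps across edges leaving a component of `X**`,
and such an edge reaches energy at least `Γ*`. On the other hand, an edge of `X**` has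
energy at most `M < Γ*`, where `M` is the largest energy below `Γ*`, so it carries weight at
least `e^{-βM} / Z_β` in the Dirichlet form. Hence the equilibrium potential varies by at most
`|X| e^{-β(Γ* - M)/2}` along each such edge, and a path of bounded length joins `□`, resp. `⊞`,
to every point of its component.
-/

lemma exists_lt_forall_le_of_lt [Fintype X] (H : X → ℝ) (c : ℝ) :
    ∃ M < c, ∀ ξ, H ξ < c → H ξ ≤ M := by
  set s := insert (c - 1) ((Finset.univ.filter (H · < c)).image H)
  refine ⟨s.max' (Finset.insert_nonempty _ _), (Finset.max'_lt_iff _ _).2 fun y hy => ?_,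
    fun ξ hξ => s.le_max' _ (Finset.mem_insert_of_mem (Finset.mem_image_of_mem H (by simpa)))⟩
  rcases Finset.mem_insert.mp hy with rfl | hy
  · linarith
  · obtain ⟨ξ, hξ, rfl⟩ := Finset.mem_image.mp hy
    exact (Finset.mem_filter.mp hξ).2

section Paths

variable {rel : X → X → Prop} {H : X → ℝ}

lemma le_pathMax {L : ℕ} (ω : ℕ → X) {i : ℕ} (hi : i ≤ L) : H (ω i) ≤ pathMax H L ω :=
  Finset.le_sup' (fun i => H (ω i)) (Finset.mem_range.mpr (Nat.lt_succ_of_le hi))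

lemma pathMax_lt_of_forall_lt {L : ℕ} {ω : ℕ → X} {c : ℝ} (h : ∀ i ≤ L, H (ω i) < c) :
    pathMax H L ω < c :=
  (Finset.sup'_lt_iff _).2 fun i hi => h i (Nat.lt_succ_iff.mp (Finset.mem_range.mp hi))

lemma commH_le_pathMax {a b : X} {L : ℕ} {ω : ℕ → X} (hp : IsPathW rel a b L ω) :
    commH rel H a b ≤ pathMax H L ω := by
  refine csInf_le ⟨H a, ?_⟩ ⟨L, ω, hp, rfl⟩
  rintro m ⟨L', ω', hp', rfl⟩
  exact hp'.1 ▸ le_pathMax ω' (Nat.zero_le L')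

lemma abs_sub_le_of_isPathW {a b : X} {L : ℕ} {ω : ℕ → X} (hp : IsPathW rel a b L ω)
    (f : X → ℝ) {ε : ℝ} (hstep : ∀ i < L, |f (ω i) - f (ω (i + 1))| ≤ ε) :
    |f a - f b| ≤ L * ε := by
  have hsum := dist_le_range_sum_dist (fun i => f (ω i)) L
  simp only [Real.dist_eq, hp.1, hp.2.1] at hsum
  calc |f a - f b| ≤ ∑ i ∈ Finset.range L, |f (ω i) - f (ω (i + 1))| := hsum
    _ ≤ (Finset.range L).card • ε :=
      Finset.sum_le_card_nsmul _ _ _ fun i hi => hstep i (Finset.mem_range.mp hi)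
    _ = L * ε := by rw [Finset.card_range, nsmul_eq_mul]

lemma exists_forall_connIn_length_le [Finite X] (rel : X → X → Prop) (S : Set X) :
    ∃ N : ℕ, ∀ a b, connIn rel S a b →
      ∃ L ω, L ≤ N ∧ IsPathW rel a b L ω ∧ ∀ i ≤ L, ω i ∈ S := by
  have : ∀ p : X × X, ∃ L, connIn rel S p.1 p.2 →
      ∃ ω, IsPathW rel p.1 p.2 L ω ∧ ∀ i ≤ L, ω i ∈ S := by
    intro p
    by_cases h : connIn rel S p.1 p.2
    · obtain ⟨L, ω, hω⟩ := h
      exact ⟨L, fun _ => ⟨ω, hω⟩⟩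
    · exact ⟨0, fun h' => absurd h' h⟩
  choose F hF using this
  obtain ⟨N, hN⟩ := Finite.exists_le F
  refine ⟨N, fun a b h => ?_⟩
  obtain ⟨ω, hω⟩ := hF (a, b) h
  exact ⟨F (a, b), ω, hN _, hω⟩

end Paths

section Components

variable {rel : X → X → Prop} {H : X → ℝ} {a b root : X}

lemma mem_compOf_self (h : H root < gammaStar rel H a b) : root ∈ compOf rel H a b root :=
  ⟨0, fun _ => root, ⟨rfl, rfl, fun i hi => absurd hi (Nat.not_lt_zero i)⟩, fun _ _ => h⟩

lemma notMem_compOf_self (ha : 0 ≤ H a) : b ∉ compOf rel H a b a := by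
  rintro ⟨L, ω, hp, hS⟩
  have hlt : pathMax H L ω < gammaStar rel H a b := pathMax_lt_of_forall_lt hS
  have := commH_le_pathMax (H := H) hp
  unfold gammaStar at hlt
  linarith

/-- Appending the edge `η ∼ η'` to a path inside `X**` shows that `η'` would lie in the
component unless its energy is at least `Γ*`. -/
lemma gammaStar_le_of_rel_of_notMem {η η' : X} (hη : η ∈ compOf rel H a b root)
    (hrel : rel η η') (hη' : η' ∉ compOf rel H a b root) : gammaStar rel H a b ≤ H η' := by
  by_contra! hc
  obtain ⟨L, ω, ⟨h0, hL, hstep⟩, hS⟩ := hη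
  refine hη' ⟨L + 1, fun i => if i ≤ L then ω i else η', ⟨by simpa using h0, by simp, ?_⟩, ?_⟩
  · intro i hi
    rcases Nat.lt_or_ge i L with h | h
    · simpa [h.le, Nat.succ_le_of_lt h] using hstep i h
    · obtain rfl : i = L := by omega
      simpa [hL] using hrel
  · intro i hi
    by_cases h : i ≤ L
    · simpa [h] using hS i h
    · simpa [h, Xss] using hc

end Components

section Dirichlet

variable [Fintype X] {rel : X → X → Prop} {H : X → ℝ} {β : ℝ}

lemma Zb_pos [Nonempty X] (H : X → ℝ) (β : ℝ) : 0 < Zb H β :=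
  Finset.sum_pos (fun _ _ => Real.exp_pos _) Finset.univ_nonempty

lemma gibbs_mul_crate_of_rel {η η' : X} (hrel : rel η η') :
    gibbs H β η * crate rel H β η η' = Real.exp (-β * max (H η) (H η')) / Zb H β := by
  rw [gibbs, crate, if_pos hrel, div_mul_eq_mul_div, ← Real.exp_add]
  congr 2
  rcases le_total (H η) (H η') with h | h
  · rw [max_eq_right h, max_eq_left (sub_nonneg.mpr h)]; ring
  · rw [max_eq_left h, max_eq_right (sub_nonpos.mpr h)]; ring

lemma dirE_term_nonneg [Nonempty X] (h : X → ℝ) (η η' : X) :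
    0 ≤ gibbs H β η * crate rel H β η η' * (h η - h η') ^ 2 := by
  refine mul_nonneg (mul_nonneg (div_nonneg (Real.exp_pos _).le (Zb_pos H β).le) ?_) (sq_nonneg _)
  unfold crate
  split_ifs
  exacts [(Real.exp_pos _).le, le_rfl]

lemma dirE_nonneg [Nonempty X] (h : X → ℝ) : 0 ≤ dirE rel H β h :=
  mul_nonneg (by norm_num) (Finset.sum_nonneg fun _ _ =>
    Finset.sum_nonneg fun _ _ => dirE_term_nonneg h _ _)

lemma dirE_term_le [Nonempty X] (h : X → ℝ) (η η' : X) :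
    gibbs H β η * crate rel H β η η' * (h η - h η') ^ 2 ≤ 2 * dirE rel H β h := by
  rw [dirE, ← mul_assoc, show (2 : ℝ) * (1 / 2) = 1 by norm_num, one_mul]
  exact (Finset.single_le_sum (fun η' _ => dirE_term_nonneg h η η') (Finset.mem_univ η')).trans
    (Finset.single_le_sum (fun η _ => Finset.sum_nonneg fun η' _ => dirE_term_nonneg h η η')
      (Finset.mem_univ η))

lemma dirE_le_of_forall_term_le (h : X → ℝ) {c : ℝ}
    (hc : ∀ η η', gibbs H β η * crate rel H β η η' * (h η - h η') ^ 2 ≤ c) :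
    dirE rel H β h ≤ Fintype.card X ^ 2 * c / 2 := by
  have := Finset.sum_le_sum fun η (_ : η ∈ Finset.univ) =>
    Finset.sum_le_sum fun η' (_ : η' ∈ Finset.univ) => hc η η'
  simp only [Finset.sum_const, Finset.card_univ, nsmul_eq_mul] at this
  rw [dirE]
  nlinarith

lemma capB_le_dirE [Nonempty X] {A B : Set X} {h : X → ℝ} (hbd : ∀ η, 0 ≤ h η ∧ h η ≤ 1)
    (hA : ∀ η ∈ A, h η = 1) (hB : ∀ η ∈ B, h η = 0) : capB rel H β A B ≤ dirE rel H β h := by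
  refine csInf_le ⟨0, ?_⟩ ⟨h, hbd, hA, hB, rfl⟩
  rintro e ⟨h', -, -, -, rfl⟩
  exact dirE_nonneg h'

lemma dirE_indicator_compOf_le (hsymm : Symmetric rel) (hβ : 0 ≤ β) (a b root : X) :
    dirE rel H β ((compOf rel H a b root).indicator 1) ≤
      Fintype.card X ^ 2 * (Real.exp (-β * gammaStar rel H a b) / Zb H β) / 2 := by
  have : Nonempty X := ⟨a⟩
  have hZ := Zb_pos H β
  set A := compOf rel H a b root
  set Γ := gammaStar rel H a b
  refine dirE_le_of_forall_term_le _ fun η η' => ?_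
  by_cases hrel : rel η η'
  swap
  · simp only [crate, if_neg hrel, mul_zero, zero_mul]
    positivity
  rw [gibbs_mul_crate_of_rel hrel]
  by_cases hiff : η ∈ A ↔ η' ∈ A
  · have hsame : A.indicator 1 η = A.indicator (1 : X → ℝ) η' := by
      simp only [Set.indicator_apply, hiff, Pi.one_apply]
    rw [hsame, sub_self, zero_pow two_ne_zero, mul_zero]
    positivity
  have hΓ : Γ ≤ max (H η) (H η') := by
    by_cases hη : η ∈ A
    · have hη' : η' ∉ A := fun h => hiff ⟨fun _ => h, fun _ => hη⟩
      exact (gammaStar_le_of_rel_of_notMem hη hrel hη').trans (le_max_right _ _)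
    · have hη' : η' ∈ A := by tauto
      exact (gammaStar_le_of_rel_of_notMem hη' (hsymm hrel) hη).trans (le_max_left _ _)
  have hjump : (A.indicator 1 η - A.indicator (1 : X → ℝ) η') ^ 2 ≤ 1 := by
    simp only [Set.indicator_apply]
    split_ifs <;> norm_num
  calc Real.exp (-β * max (H η) (H η')) / Zb H β * (A.indicator 1 η - A.indicator 1 η') ^ 2
      ≤ Real.exp (-β * max (H η) (H η')) / Zb H β := mul_le_of_le_one_right (by positivity) hjump
    _ ≤ Real.exp (-β * Γ) / Zb H β :=
      div_le_div_of_nonneg_right (Real.exp_le_exp.2 (by nlinarith)) hZ.le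

lemma sq_sub_le_of_dirE_le [Nonempty X] {h : X → ℝ} {K Γ : ℝ} {η η' : X} (hrel : rel η η')
    (hE : dirE rel H β h ≤ K * (Real.exp (-β * Γ) / Zb H β) / 2) :
    (h η - h η') ^ 2 ≤ K * Real.exp (-β * (Γ - max (H η) (H η'))) := by
  set m := max (H η) (H η')
  have hZ := Zb_pos H β
  have hterm := dirE_term_le (rel := rel) (H := H) (β := β) h η η'
  rw [gibbs_mul_crate_of_rel hrel] at hterm
  have hweighted : Real.exp (-β * m) * (h η - h η') ^ 2 ≤ K * Real.exp (-β * Γ) := by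
    have hE' : 2 * dirE rel H β h ≤ K * Real.exp (-β * Γ) / Zb H β := by
      rw [mul_div_assoc]; linarith
    have := hterm.trans hE'
    rwa [div_mul_eq_mul_div, div_le_div_iff_of_pos_right hZ] at this
  calc (h η - h η') ^ 2 = Real.exp (β * m) * (Real.exp (-β * m) * (h η - h η') ^ 2) := by
        rw [← mul_assoc, ← Real.exp_add]; simp
    _ ≤ Real.exp (β * m) * (K * Real.exp (-β * Γ)) := by gcongr
    _ = K * Real.exp (-β * (Γ - m)) := by rw [mul_left_comm, ← Real.exp_add]; ring_nf

lemma abs_sub_le_of_dirE_le [Nonempty X] {h : X → ℝ} {Γ M : ℝ} (hβ : 0 ≤ β) {η η' : X}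
    (hrel : rel η η') (hη : H η ≤ M) (hη' : H η' ≤ M)
    (hE : dirE rel H β h ≤ Fintype.card X ^ 2 * (Real.exp (-β * Γ) / Zb H β) / 2) :
    |h η - h η'| ≤ Fintype.card X * Real.exp (-((Γ - M) / 2) * β) := by
  refine abs_le_of_sq_le_sq ?_ (by positivity)
  calc (h η - h η') ^ 2 ≤ Fintype.card X ^ 2 * Real.exp (-β * (Γ - max (H η) (H η'))) :=
        sq_sub_le_of_dirE_le hrel hE
    _ ≤ Fintype.card X ^ 2 * Real.exp (-β * (Γ - M)) :=
        mul_le_mul_of_nonneg_left (Real.exp_le_exp.2 (by nlinarith [max_le hη hη'])) (by positivity)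
    _ = (Fintype.card X * Real.exp (-((Γ - M) / 2) * β)) ^ 2 := by
        rw [mul_pow, sq (Real.exp _), ← Real.exp_add]
        ring_nf

end Dirichlet

theorem stmt_16_general [Fintype X] (rel : X → X → Prop) (H : X → ℝ)
    (hsymm : Symmetric rel)
    (sq bx : X) (Hsq : H sq = 0)
    (hΓ : 0 < gammaStar rel H sq bx) :
    ∃ C : ℝ, ∃ δ : ℝ, 0 < δ ∧ ∀ β : ℝ, 0 < β →
      ∀ hstar : X → ℝ,
        (∀ η, 0 ≤ hstar η ∧ hstar η ≤ 1) → hstar sq = 1 → hstar bx = 0 →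
        dirE rel H β hstar = capB rel H β {sq} {bx} →
        (∀ η ∈ compOf rel H sq bx sq, 1 - C * Real.exp (-δ * β) ≤ hstar η) ∧
        (∀ η ∈ compOf rel H sq bx bx, hstar η ≤ C * Real.exp (-δ * β)) := by
  have : Nonempty X := ⟨sq⟩
  set Γ := gammaStar rel H sq bx
  set A := compOf rel H sq bx sq
  obtain ⟨M, hMΓ, hM⟩ := exists_lt_forall_le_of_lt H Γ
  obtain ⟨N, hN⟩ := exists_forall_connIn_length_le rel (Xss rel H sq bx)
  refine ⟨Fintype.card X * N, (Γ - M) / 2, by linarith, fun β hβ h hbd h1 h0 hcap => ?_⟩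
  have hE : dirE rel H β h ≤ Fintype.card X ^ 2 * (Real.exp (-β * Γ) / Zb H β) / 2 := by
    rw [hcap]
    refine (capB_le_dirE (h := A.indicator 1) (fun η => ?_) ?_ ?_).trans
      (dirE_indicator_compOf_le hsymm hβ.le sq bx sq)
    · by_cases hη : η ∈ A <;> simp [hη]
    · rintro _ rfl
      exact Set.indicator_of_mem (mem_compOf_self (Hsq ▸ hΓ)) _
    · rintro _ rfl
      exact Set.indicator_of_notMem (notMem_compOf_self Hsq.ge) _
  have hosc : ∀ r η, connIn rel (Xss rel H sq bx) r η →
      |h r - h η| ≤ Fintype.card X * N * Real.exp (-((Γ - M) / 2) * β) := by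
    intro r η hconn
    obtain ⟨L, ω, hLN, hp, hS⟩ := hN r η hconn
    calc |h r - h η| ≤ L * (Fintype.card X * Real.exp (-((Γ - M) / 2) * β)) :=
          abs_sub_le_of_isPathW hp h fun i hi => abs_sub_le_of_dirE_le hβ.le (hp.2.2 i hi)
            (hM _ (hS i hi.le)) (hM _ (hS (i + 1) hi)) hE
      _ ≤ N * (Fintype.card X * Real.exp (-((Γ - M) / 2) * β)) := by gcongr
      _ = Fintype.card X * N * Real.exp (-((Γ - M) / 2) * β) := by ring
  refine ⟨fun η hη => ?_, fun η hη => ?_⟩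
  · have := hosc sq η hη
    rw [h1] at this
    linarith [le_abs_self (1 - h η)]
  · have := hosc bx η hη
    rw [h0, zero_sub, abs_neg] at this
    linarith [le_abs_self (h η)]

/-- under (H1)–(H2) and Γ* > 0, there exist C < ∞ and δ > 0 such
that every minimizer h* of the variational problem for CAP_β({□},{⊞}) (the
equilibrium potential) satisfies min_{X_□} h* ≥ 1 − Ce^{−δβ} and
max_{X_⊞} h* ≤ Ce^{−δβ}, for every β > 0. -/
theorem stmt_16 [Fintype X] (rel : X → X → Prop) (H : X → ℝ)
    (hsymm : Symmetric rel) (hconn : ConnGraph rel)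
    (sq bx : X) (hne : sq ≠ bx) (Hsq : H sq = 0)
    -- (H1): X_stab = {⊞}
    (hH1 : {η : X | ∀ ξ, H η ≤ H ξ} = {bx})
    -- (H2): ∃ V* < Γ* with V_η ≤ V* for all η ∉ {□,⊞}
    (hH2 : ∃ Vs : ℝ, Vs < gammaStar rel H sq bx ∧
      ∀ η : X, η ≠ sq → η ≠ bx →
        ({ξ : X | H ξ < H η}).Nonempty ∧
        commHS rel H {η} {ξ : X | H ξ < H η} - H η ≤ Vs)
    (hΓ : 0 < gammaStar rel H sq bx) :
    ∃ C : ℝ, ∃ δ : ℝ, 0 < δ ∧ ∀ β : ℝ, 0 < β →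
      ∀ hstar : X → ℝ,
        (∀ η, 0 ≤ hstar η ∧ hstar η ≤ 1) → hstar sq = 1 → hstar bx = 0 →
        dirE rel H β hstar = capB rel H β {sq} {bx} →
        (∀ η ∈ compOf rel H sq bx sq, 1 - C * Real.exp (-δ * β) ≤ hstar η) ∧
        (∀ η ∈ compOf rel H sq bx bx, hstar η ≤ C * Real.exp (-δ * β)) :=
  stmt_16_general rel H hsymm sq bx Hsq hΓ
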